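/- Let k be a field, q ∈ k* with q^d ≠ 1, and A = k[h^{±1}](σ, h^d − 1) with σ(h) = qh. For any γ ∈ k* with γ^d = q^{-τ d}, τ ∈ {0,1}, and units p, p' ∈ k[h^{±1}] (Laurent monomials) with p p' = (−h^{-d})^τ, the assignment ψ(h) = γ h^{(-1)^τ}, ψ(x) = p x^{1-τ} y^τ, ψ(y) = x^τ y^{1-τ} p' extends to a k-algebra automorphism of A. -/

import Mathlib

/-- Relations defining the generalized Weyl algebra `k[h^{±1}](σ, h^d − 1)` with
`σ(h) = qh`: generators `h = ι 0`, `h⁻¹ = ι 1`, `x = ι 2`, `y = ι 3`. -/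
inductive GWARel (k : Type*) [Field k] (q : k) (d : ℕ) :
    FreeAlgebra k (Fin 4) → FreeAlgebra k (Fin 4) → Prop
  | hh : GWARel k q d (FreeAlgebra.ι k 0 * FreeAlgebra.ι k 1) 1
  | hh' : GWARel k q d (FreeAlgebra.ι k 1 * FreeAlgebra.ι k 0) 1
  | xh : GWARel k q d (FreeAlgebra.ι k 2 * FreeAlgebra.ι k 0)
      (q • (FreeAlgebra.ι k 0 * FreeAlgebra.ι k 2))
  | yh : GWARel k q d (FreeAlgebra.ι k 3 * FreeAlgebra.ι k 0)
      (q⁻¹ • (FreeAlgebra.ι k 0 * FreeAlgebra.ι k 3))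
  | xy : GWARel k q d (FreeAlgebra.ι k 2 * FreeAlgebra.ι k 3)
      (q ^ d • FreeAlgebra.ι k 0 ^ d - 1)
  | yx : GWARel k q d (FreeAlgebra.ι k 3 * FreeAlgebra.ι k 2)
      (FreeAlgebra.ι k 0 ^ d - 1)

/-- The generalized Weyl algebra `A(d,q) = k[h^{±1}](σ, h^d − 1)`. -/
abbrev GWA (k : Type*) [Field k] (q : k) (d : ℕ) := RingQuot (GWARel k q d)

variable (k : Type*) [Field k] (q : k) (d : ℕ)

noncomputable def hGen : GWA k q d := RingQuot.mkAlgHom k (GWARel k q d) (FreeAlgebra.ι k 0)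
noncomputable def hInv : GWA k q d := RingQuot.mkAlgHom k (GWARel k q d) (FreeAlgebra.ι k 1)
noncomputable def xGen : GWA k q d := RingQuot.mkAlgHom k (GWARel k q d) (FreeAlgebra.ι k 2)
noncomputable def yGen : GWA k q d := RingQuot.mkAlgHom k (GWARel k q d) (FreeAlgebra.ι k 3)

/-- `h^m` for an integer `m`, via `h` and `h⁻¹`. -/
noncomputable def hZPow (m : ℤ) : GWA k q d :=
  if 0 ≤ m then hGen k q d ^ m.toNat else hInv k q d ^ (-m).toNat

/-!
The images of `h, x, y` satisfy the defining relations, so `ψ` is an algebra endomorphism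
by the universal property of the quotient. The hypothesis on `p p'` is read off through the
action of `A` on `k[z^{±1}]` in which the Laurent monomials `h^m` act by distinct shifts: it gives
`c c' = (-1)^τ` and `s + s' = -τd`. For `τ = 0` the maps form a group under composition, so each
is invertible; for `τ = 1` the square of the map is one of the `τ = 0` maps, hence bijective.
-/

variable {k q d}

theorem Units.val_smul_zpow {A : Type*} [Ring A] [Algebra k A] (γ : kˣ) (u : Aˣ) (m : ℤ) :
    (↑((γ • u) ^ m) : A) = (γ : k) ^ m • ↑(u ^ m) := by
  have hγu : γ • u = Units.map (algebraMap k A : k →* A) γ * u :=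
    Units.ext (by rw [Units.val_smul, Units.smul_def, Algebra.smul_def]; rfl)
  have hcomm : Commute (Units.map (algebraMap k A : k →* A) γ) u :=
    Units.ext (Algebra.commutes _ _)
  rw [hγu, hcomm.mul_zpow, Units.val_mul, ← map_zpow, Units.coe_map, Algebra.smul_def]
  simp

theorem mul_units_zpow_of_mul_eq_smul {A : Type*} [Semiring A] [Algebra k A] {a : A} {u : Aˣ}
    {r : k} (hr : r ≠ 0) (h : a * u = r • (u * a)) (m : ℤ) :
    a * ↑(u ^ m) = r ^ m • (↑(u ^ m) * a) := by
  have h_inv : a * ↑u⁻¹ = r⁻¹ • (↑u⁻¹ * a) :=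
    calc a * ↑u⁻¹ = r⁻¹ • (↑u⁻¹ * (a * u) * ↑u⁻¹) := by
          rw [h, mul_smul_comm, smul_mul_assoc, Units.inv_mul_cancel_left, inv_smul_smul₀ hr]
      _ = r⁻¹ • (↑u⁻¹ * a) := by rw [mul_assoc, Units.mul_inv_cancel_right]
  induction m using Int.induction_on with
  | zero => simp
  | succ n ih =>
    rw [zpow_add_one, Units.val_mul, ← mul_assoc, ih, smul_mul_assoc, mul_assoc, h, mul_smul_comm,
      smul_smul, ← mul_assoc, zpow_add_one₀ hr]
  | pred n ih =>
    rw [zpow_sub_one, Units.val_mul, ← mul_assoc, ih, smul_mul_assoc, mul_assoc, h_inv,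
      mul_smul_comm, smul_smul, ← mul_assoc, zpow_sub_one₀ hr]

namespace GWA

theorem hGen_mul_hInv : hGen k q d * hInv k q d = 1 := by
  simpa [hGen, hInv] using RingQuot.mkAlgHom_rel k (GWARel.hh (k := k) (q := q) (d := d))

theorem hInv_mul_hGen : hInv k q d * hGen k q d = 1 := by
  simpa [hGen, hInv] using RingQuot.mkAlgHom_rel k (GWARel.hh' (k := k) (q := q) (d := d))

theorem xGen_mul_hGen : xGen k q d * hGen k q d = q • (hGen k q d * xGen k q d) := by
  simpa [hGen, xGen] using RingQuot.mkAlgHom_rel k (GWARel.xh (k := k) (q := q) (d := d))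

theorem yGen_mul_hGen : yGen k q d * hGen k q d = q⁻¹ • (hGen k q d * yGen k q d) := by
  simpa [hGen, yGen] using RingQuot.mkAlgHom_rel k (GWARel.yh (k := k) (q := q) (d := d))

theorem xGen_mul_yGen : xGen k q d * yGen k q d = q ^ d • hGen k q d ^ d - 1 := by
  simpa [hGen, xGen, yGen] using RingQuot.mkAlgHom_rel k (GWARel.xy (k := k) (q := q) (d := d))

theorem yGen_mul_xGen : yGen k q d * xGen k q d = hGen k q d ^ d - 1 := by
  simpa [hGen, xGen, yGen] using RingQuot.mkAlgHom_rel k (GWARel.yx (k := k) (q := q) (d := d))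

variable (k q d) in
noncomputable def hUnit : (GWA k q d)ˣ :=
  ⟨hGen k q d, hInv k q d, hGen_mul_hInv, hInv_mul_hGen⟩

@[simp] theorem val_hUnit : ↑(hUnit k q d) = hGen k q d := rfl

@[simp] theorem val_inv_hUnit : ↑(hUnit k q d)⁻¹ = hInv k q d := rfl

theorem hZPow_eq_val_zpow (m : ℤ) : hZPow k q d m = ↑(hUnit k q d ^ m) := by
  obtain ⟨n, rfl | rfl⟩ := Int.eq_nat_or_neg m
  · simp [hZPow]
  · rcases n with _ | n
    · simp [hZPow]
    · rw [hZPow, if_neg (by omega), neg_neg, Int.toNat_natCast, zpow_neg, zpow_natCast,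
        ← inv_pow, Units.val_pow_eq_pow_val, val_inv_hUnit]

@[simp] theorem hZPow_zero : hZPow k q d 0 = 1 := by simp [hZPow_eq_val_zpow]

@[simp] theorem hZPow_one : hZPow k q d 1 = hGen k q d := by simp [hZPow_eq_val_zpow]

@[simp] theorem hZPow_neg_one : hZPow k q d (-1) = hInv k q d := by simp [hZPow_eq_val_zpow]

@[simp] theorem hZPow_natCast (n : ℕ) : hZPow k q d n = hGen k q d ^ n := by
  simp [hZPow_eq_val_zpow]

theorem hZPow_pow (m : ℤ) (n : ℕ) : hZPow k q d m ^ n = hZPow k q d (m * n) := by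
  simp [hZPow_eq_val_zpow, zpow_mul]

theorem hZPow_mul_hZPow (m n : ℤ) : hZPow k q d m * hZPow k q d n = hZPow k q d (m + n) := by
  simp [hZPow_eq_val_zpow, zpow_add]

theorem hZPow_mul_hZPow_mul (m n : ℤ) (z : GWA k q d) :
    hZPow k q d m * (hZPow k q d n * z) = hZPow k q d (m + n) * z := by
  rw [← mul_assoc, hZPow_mul_hZPow]

theorem smul_hZPow_mul_smul_hZPow (a b : k) (m n : ℤ) :
    a • hZPow k q d m * b • hZPow k q d n = (a * b) • hZPow k q d (m + n) := by
  rw [smul_mul_smul_comm, hZPow_mul_hZPow]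

theorem xGen_mul_hZPow (hq0 : q ≠ 0) (m : ℤ) :
    xGen k q d * hZPow k q d m = q ^ m • (hZPow k q d m * xGen k q d) := by
  simpa [hZPow_eq_val_zpow] using mul_units_zpow_of_mul_eq_smul hq0 xGen_mul_hGen m

theorem yGen_mul_hZPow (hq0 : q ≠ 0) (m : ℤ) :
    yGen k q d * hZPow k q d m = q⁻¹ ^ m • (hZPow k q d m * yGen k q d) := by
  simpa [hZPow_eq_val_zpow] using
    mul_units_zpow_of_mul_eq_smul (inv_ne_zero hq0) yGen_mul_hGen m

theorem xGen_mul_hZPow_mul (hq0 : q ≠ 0) (m : ℤ) (z : GWA k q d) :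
    xGen k q d * (hZPow k q d m * z) = q ^ m • (hZPow k q d m * (xGen k q d * z)) := by
  rw [← mul_assoc, xGen_mul_hZPow hq0, smul_mul_assoc, mul_assoc]

theorem yGen_mul_hZPow_mul (hq0 : q ≠ 0) (m : ℤ) (z : GWA k q d) :
    yGen k q d * (hZPow k q d m * z) = q⁻¹ ^ m • (hZPow k q d m * (yGen k q d * z)) := by
  rw [← mul_assoc, yGen_mul_hZPow hq0, smul_mul_assoc, mul_assoc]

section lift

variable {B : Type*} [Ring B] [Algebra k B]

variable (q d) in
structure Relations (H : Bˣ) (X Y : B) : Prop where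
  x_mul_h : X * H = q • (H * X)
  y_mul_h : Y * H = q⁻¹ • (H * Y)
  x_mul_y : X * Y = q ^ d • (H : B) ^ d - 1
  y_mul_x : Y * X = (H : B) ^ d - 1

variable {H : Bˣ} {X Y : B} (hr : Relations q d H X Y)

noncomputable def lift : GWA k q d →ₐ[k] B :=
  RingQuot.liftAlgHom k ⟨FreeAlgebra.lift k ![↑H, ↑H⁻¹, X, Y], by
    rintro _ _ ⟨⟩ <;> simp [hr.x_mul_h, hr.y_mul_h, hr.x_mul_y, hr.y_mul_x]⟩

@[simp] theorem lift_hGen : lift hr (hGen k q d) = H := by simp [lift, hGen]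

@[simp] theorem lift_xGen : lift hr (xGen k q d) = X := by simp [lift, xGen]

@[simp] theorem lift_yGen : lift hr (yGen k q d) = Y := by simp [lift, yGen]

theorem map_hZPow (f : GWA k q d →ₐ[k] B) (hf : f (hGen k q d) = H) (m : ℤ) :
    f (hZPow k q d m) = ↑(H ^ m) := by
  have hunit : Units.map f.toMonoidHom (hUnit k q d) = H := Units.ext hf
  rw [hZPow_eq_val_zpow, ← hunit, ← map_zpow]
  rfl

theorem algHom_ext {f g : GWA k q d →ₐ[k] B}
    (hh : f (hGen k q d) = g (hGen k q d)) (hx : f (xGen k q d) = g (xGen k q d))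
    (hy : f (yGen k q d) = g (yGen k q d)) : f = g := by
  have hh' : f (hInv k q d) = g (hInv k q d) := by
    have hunit : Units.map (f : GWA k q d →* B) (hUnit k q d) =
        Units.map (g : GWA k q d →* B) (hUnit k q d) := Units.ext hh
    simpa using congrArg (fun u : Bˣ => ((u⁻¹ : Bˣ) : B)) hunit
  refine RingQuot.ringQuot_ext' _ _ _ (FreeAlgebra.hom_ext (funext fun i => ?_))
  fin_cases i
  exacts [hh, hh', hx, hy]

end lift

section laurent

/- The representation of `A` on `k[z^{±1}] = ℤ →₀ k`: `h` acts by `z`,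
`x` by `f(z) ↦ f(qz)` and `y` by `f(z) ↦ (z^d - 1) f(q⁻¹z)`. -/

variable (k) in
noncomputable def shift (m : ℤ) : Module.End k (ℤ →₀ k) := Finsupp.lmapDomain k k (· + m)

variable (q) in
noncomputable def laurentX : Module.End k (ℤ →₀ k) :=
  Finsupp.lsum k fun n => q ^ n • Finsupp.lsingle n

variable (q d) in
noncomputable def laurentY : Module.End k (ℤ →₀ k) :=
  Finsupp.lsum k fun n => q ^ (-n) • (Finsupp.lsingle (n + d) - Finsupp.lsingle n)

theorem shift_single (m n : ℤ) (a : k) :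
    shift k m (Finsupp.single n a) = Finsupp.single (n + m) a := by
  simp [shift]

theorem laurentX_single (n : ℤ) (a : k) :
    laurentX q (Finsupp.single n a) = Finsupp.single n (q ^ n * a) := by
  simp [laurentX]

theorem laurentY_single (n : ℤ) (a : k) :
    laurentY q d (Finsupp.single n a) =
      Finsupp.single (n + d) (q ^ (-n) * a) - Finsupp.single n (q ^ (-n) * a) := by
  simp [laurentY, smul_sub]

theorem shift_zero : shift k 0 = 1 :=
  Finsupp.lhom_ext fun n a => by rw [shift_single, add_zero, Module.End.one_apply]

theorem shift_mul_shift (m n : ℤ) : shift k m * shift k n = shift k (m + n) :=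
  Finsupp.lhom_ext fun i a => by
    rw [Module.End.mul_apply, shift_single, shift_single, shift_single, add_assoc, add_comm n]

variable (k) in
noncomputable def shiftUnit : (Module.End k (ℤ →₀ k))ˣ :=
  ⟨shift k 1, shift k (-1), by rw [shift_mul_shift, add_neg_cancel, shift_zero],
    by rw [shift_mul_shift, neg_add_cancel, shift_zero]⟩

theorem val_shiftUnit_zpow (m : ℤ) : ↑(shiftUnit k ^ m) = shift k m := by
  induction m using Int.induction_on with
  | zero => rw [zpow_zero, Units.val_one, shift_zero]
  | succ n ih => rw [zpow_add_one, Units.val_mul, ih, shiftUnit, Units.val_mk, shift_mul_shift]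
  | pred n ih =>
    rw [zpow_sub_one, Units.val_mul, ih, shiftUnit, Units.inv_mk, Units.val_mk, shift_mul_shift,
      sub_eq_add_neg]

theorem relations_laurent (hq0 : q ≠ 0) :
    Relations q d (shiftUnit k) (laurentX q) (laurentY q d) where
  x_mul_h := Finsupp.lhom_ext fun n a => by
    simp only [shiftUnit, Units.val_mk, Module.End.mul_apply, LinearMap.smul_apply, shift_single,
      laurentX_single, Finsupp.smul_single, smul_eq_mul, zpow_add_one₀ hq0, mul_assoc,
      mul_left_comm q]
  y_mul_h := Finsupp.lhom_ext fun n a => by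
    simp only [shiftUnit, Units.val_mk, Module.End.mul_apply, LinearMap.smul_apply, shift_single,
      laurentY_single, map_sub, Finsupp.smul_single, smul_sub, smul_eq_mul, add_right_comm n 1]
    rw [neg_add, zpow_add₀ hq0, zpow_neg_one, mul_assoc, mul_left_comm q⁻¹]
  x_mul_y := Finsupp.lhom_ext fun n a => by
    simp only [← Units.val_pow_eq_pow_val, ← zpow_natCast, val_shiftUnit_zpow,
      Module.End.mul_apply, LinearMap.sub_apply, LinearMap.smul_apply, Module.End.one_apply,
      shift_single, laurentY_single, laurentX_single, map_sub, Finsupp.smul_single, smul_eq_mul,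
      ← mul_assoc, ← zpow_add₀ hq0]
    simp
  y_mul_x := Finsupp.lhom_ext fun n a => by
    simp only [← Units.val_pow_eq_pow_val, ← zpow_natCast, val_shiftUnit_zpow,
      Module.End.mul_apply, LinearMap.sub_apply, Module.End.one_apply, shift_single,
      laurentY_single, laurentX_single, ← mul_assoc, ← zpow_add₀ hq0]
    simp

variable (d) in
noncomputable def laurentRep (hq0 : q ≠ 0) : GWA k q d →ₐ[k] Module.End k (ℤ →₀ k) :=
  lift (relations_laurent hq0)

theorem laurentRep_hZPow (hq0 : q ≠ 0) (m : ℤ) :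
    laurentRep d hq0 (hZPow k q d m) = shift k m := by
  rw [laurentRep, map_hZPow _ (lift_hGen _), val_shiftUnit_zpow]

theorem smul_hZPow_inj (hq0 : q ≠ 0) {a b : k} {m n : ℤ} (hb : b ≠ 0)
    (h : a • hZPow k q d m = b • hZPow k q d n) : a = b ∧ m = n := by
  have h_single := congrArg (fun f => laurentRep d hq0 f (Finsupp.single 0 1)) h
  simp only [map_smul, laurentRep_hZPow, LinearMap.smul_apply, shift_single, Finsupp.smul_single,
    smul_eq_mul, mul_one, zero_add] at h_single
  rcases Finsupp.single_eq_single_iff _ _ _ _ |>.mp h_single with ⟨hmn, hab⟩ | ⟨-, hb0⟩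
  exacts [⟨hab, hmn⟩, absurd hb0 hb]

end laurent

theorem relations_diag (hq0 : q ≠ 0) (γ : rootsOfUnity d k) (c : kˣ) (s : ℤ) :
    Relations q d ((γ : kˣ) • hUnit k q d) ((c : k) • hZPow k q d s * xGen k q d)
      (yGen k q d * ((c⁻¹ : kˣ) : k) • hZPow k q d (-s)) := by
  constructor <;>
  · simp only [Units.val_smul, val_hUnit, Units.smul_def, ← hZPow_one, smul_pow, hZPow_pow,
      smul_mul_assoc, mul_smul_comm, mul_assoc, smul_smul, smul_sub, mul_sub,
      xGen_mul_hZPow_mul hq0, xGen_mul_hZPow hq0, yGen_mul_hZPow_mul hq0,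
      yGen_mul_hZPow hq0, hZPow_mul_hZPow_mul, hZPow_mul_hZPow, xGen_mul_yGen, yGen_mul_xGen]
    ring_nf
    try simp only [hZPow_zero, one_mul]
    match_scalars <;>
      simp only [(mem_rootsOfUnity' _ _).mp γ.2, zpow_neg, inv_zpow, zpow_one, inv_inv] <;>
      field_simp

theorem relations_swap (hq0 : q ≠ 0) (γ : kˣ) (hγ : (γ : k) ^ d = (q ^ d)⁻¹) (c : kˣ)
    (s : ℤ) :
    Relations q d (γ • (hUnit k q d)⁻¹) ((c : k) • hZPow k q d s * yGen k q d)
      (xGen k q d * (-((c⁻¹ : kˣ) : k)) • hZPow k q d (-s - d)) := by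
  constructor <;>
  · simp only [Units.val_smul, val_inv_hUnit, Units.smul_def, ← hZPow_neg_one, smul_pow,
      hZPow_pow, ← hZPow_natCast, smul_mul_assoc, mul_smul_comm, mul_assoc, smul_smul, smul_sub,
      mul_sub, xGen_mul_hZPow_mul hq0, xGen_mul_hZPow hq0, yGen_mul_hZPow_mul hq0,
      yGen_mul_hZPow hq0, hZPow_mul_hZPow_mul, hZPow_mul_hZPow, xGen_mul_yGen, yGen_mul_xGen]
    ring_nf
    try simp only [hZPow_zero, mul_one]
    match_scalars <;>
      simp only [hγ, zpow_sub₀ hq0, zpow_neg, zpow_natCast, inv_zpow, zpow_one, inv_inv] <;>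
      field_simp

/- `diagHom` is the paper's `ψ` for `τ = 0` and `swapHom` the one for `τ = 1`, with
`p = c h^s`. -/

noncomputable def diagHom (hq0 : q ≠ 0) (γ : rootsOfUnity d k) (c : kˣ) (s : ℤ) :
    GWA k q d →ₐ[k] GWA k q d :=
  lift (relations_diag hq0 γ c s)

noncomputable def swapHom (hq0 : q ≠ 0) (γ : kˣ) (hγ : (γ : k) ^ d = (q ^ d)⁻¹) (c : kˣ)
    (s : ℤ) : GWA k q d →ₐ[k] GWA k q d :=
  lift (relations_swap hq0 γ hγ c s)

section diagHom

variable (hq0 : q ≠ 0) (γ : rootsOfUnity d k) (c : kˣ) (s : ℤ)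

@[simp] theorem diagHom_hZPow (m : ℤ) :
    diagHom hq0 γ c s (hZPow k q d m) = ((γ : kˣ) : k) ^ m • hZPow k q d m := by
  rw [diagHom, map_hZPow _ (lift_hGen _), Units.val_smul_zpow, ← hZPow_eq_val_zpow]

@[simp] theorem diagHom_hGen :
    diagHom hq0 γ c s (hGen k q d) = ((γ : kˣ) : k) • hGen k q d := by
  simpa using diagHom_hZPow hq0 γ c s 1

@[simp] theorem diagHom_xGen :
    diagHom hq0 γ c s (xGen k q d) = (c : k) • hZPow k q d s * xGen k q d :=
  lift_xGen _

@[simp] theorem diagHom_yGen :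
    diagHom hq0 γ c s (yGen k q d) = yGen k q d * ((c⁻¹ : kˣ) : k) • hZPow k q d (-s) :=
  lift_yGen _

end diagHom

theorem diagHom_comp (hq0 : q ≠ 0) (a b : rootsOfUnity d k) (c e : kˣ) (s t : ℤ) :
    (diagHom hq0 a c s).comp (diagHom hq0 b e t) =
      diagHom hq0 (a * b) (e * c * (a : kˣ) ^ t) (s + t) := by
  apply algHom_ext
  · simp [smul_smul, mul_comm]
  · simp [smul_smul, hZPow_mul_hZPow_mul, add_comm t s, mul_assoc]
  · simp [smul_smul, mul_assoc, hZPow_mul_hZPow, add_comm (-t), mul_comm, mul_left_comm]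

theorem diagHom_one (hq0 : q ≠ 0) : diagHom hq0 (1 : rootsOfUnity d k) 1 0 = AlgHom.id k _ := by
  apply algHom_ext <;> simp

theorem diagHom_bijective (hq0 : q ≠ 0) (γ : rootsOfUnity d k) (c : kˣ) (s : ℤ) :
    Function.Bijective (diagHom hq0 γ c s) := by
  have h_id {a : rootsOfUnity d k} {e : kˣ} {t : ℤ} (ha : a = 1) (he : e = 1) (ht : t = 0) :
      diagHom hq0 a e t = AlgHom.id k _ := by
    subst ha he ht
    exact diagHom_one hq0
  set g := diagHom hq0 γ⁻¹ (c⁻¹ * (γ : kˣ) ^ s) (-s)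
  have hfg : (diagHom hq0 γ c s).comp g = AlgHom.id k _ := by
    rw [diagHom_comp]
    refine h_id (mul_inv_cancel γ) ?_ (add_neg_cancel s)
    rw [mul_right_comm c⁻¹, inv_mul_cancel, one_mul, ← zpow_add, add_neg_cancel, zpow_zero]
  have hgf : g.comp (diagHom hq0 γ c s) = AlgHom.id k _ := by
    rw [diagHom_comp]
    refine h_id (inv_mul_cancel γ) ?_ (neg_add_cancel s)
    rw [InvMemClass.coe_inv, inv_zpow, mul_inv_cancel_left, mul_inv_cancel]
  exact Function.bijective_iff_has_inverse.mpr
    ⟨g, fun x => congrArg (· x) hgf, fun x => congrArg (· x) hfg⟩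

section swapHom

variable (hq0 : q ≠ 0) (γ : kˣ) (hγ : (γ : k) ^ d = (q ^ d)⁻¹) (c : kˣ) (s : ℤ)

@[simp] theorem swapHom_hZPow (m : ℤ) :
    swapHom hq0 γ hγ c s (hZPow k q d m) = (γ : k) ^ m • hZPow k q d (-m) := by
  rw [swapHom, map_hZPow _ (lift_hGen _), Units.val_smul_zpow, inv_zpow', ← hZPow_eq_val_zpow]

@[simp] theorem swapHom_hGen : swapHom hq0 γ hγ c s (hGen k q d) = (γ : k) • hInv k q d := by
  simpa using swapHom_hZPow hq0 γ hγ c s 1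

@[simp] theorem swapHom_xGen :
    swapHom hq0 γ hγ c s (xGen k q d) = (c : k) • hZPow k q d s * yGen k q d :=
  lift_xGen _

@[simp] theorem swapHom_yGen :
    swapHom hq0 γ hγ c s (yGen k q d) =
      xGen k q d * (-((c⁻¹ : kˣ) : k)) • hZPow k q d (-s - d) :=
  lift_yGen _

theorem swapHom_comp_self : ∃ (κ : kˣ) (t : ℤ),
    (swapHom hq0 γ hγ c s).comp (swapHom hq0 γ hγ c s) = diagHom hq0 1 κ t := by
  refine ⟨-(γ ^ s * Units.mk0 q hq0 ^ (-s - d)), -2 * s - d, algHom_ext ?_ ?_ ?_⟩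
  · rw [AlgHom.comp_apply, ← hZPow_one, swapHom_hZPow, map_smul, swapHom_hZPow, diagHom_hZPow,
      smul_smul, neg_neg, ← zpow_add₀ γ.ne_zero]
    simp
  all_goals
    simp only [AlgHom.comp_apply, swapHom_xGen, swapHom_yGen, diagHom_xGen, diagHom_yGen,
      swapHom_hZPow, map_mul, map_smul, smul_mul_assoc, mul_smul_comm, mul_assoc, smul_smul,
      xGen_mul_hZPow hq0, yGen_mul_hZPow hq0, hZPow_mul_hZPow_mul]
    ring_nf
    match_scalars
    simp only [Units.val_mk0, zpow_sub₀ hq0, zpow_sub₀ γ.ne_zero, zpow_natCast, hγ, zpow_neg,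
      inv_zpow, zpow_add₀ hq0, zpow_mul]
    field_simp

theorem swapHom_bijective : Function.Bijective (swapHom hq0 γ hγ c s) := by
  obtain ⟨κ, t, h⟩ := swapHom_comp_self hq0 γ hγ c s
  have hsq : Function.Bijective (swapHom hq0 γ hγ c s ∘ swapHom hq0 γ hγ c s) := by
    rw [← AlgHom.coe_comp, h]
    exact diagHom_bijective hq0 1 κ t
  exact ⟨hsq.1.of_comp, hsq.2.of_comp⟩

end swapHom

end GWA

theorem stmt10_general (hq0 : q ≠ 0)
    (τ : ℕ) (hτ : τ ≤ 1) (γ : k) (hγ0 : γ ≠ 0) (hγ : γ ^ d = q ^ (-(τ : ℤ) * d))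
    (c c' : k) (s s' : ℤ)
    (hpp' : (c • hZPow k q d s) * (c' • hZPow k q d s')
          = (-(hZPow k q d (-(d : ℤ)))) ^ τ) :
    ∃ ψ : GWA k q d ≃ₐ[k] GWA k q d,
      ψ (hGen k q d) = γ • hZPow k q d ((-1) ^ τ) ∧
      ψ (xGen k q d) = (c • hZPow k q d s) * xGen k q d ^ (1 - τ) * yGen k q d ^ τ ∧
      ψ (yGen k q d) = xGen k q d ^ τ * yGen k q d ^ (1 - τ) * (c' • hZPow k q d s') := by
  rw [GWA.smul_hZPow_mul_smul_hZPow] at hpp'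
  obtain rfl | rfl : τ = 0 ∨ τ = 1 := by omega
  · obtain ⟨hcc', hss'⟩ := GWA.smul_hZPow_inj hq0 one_ne_zero
      (hpp'.trans (by simp) : _ = (1 : k) • hZPow k q d 0)
    have hc : c ≠ 0 := left_ne_zero_of_mul_eq_one hcc'
    obtain rfl : c' = c⁻¹ := eq_inv_of_mul_eq_one_right hcc'
    obtain rfl : s' = -s := by omega
    have hγ' : Units.mk0 γ hγ0 ∈ rootsOfUnity d k :=
      (mem_rootsOfUnity' d _).mpr (by simpa using hγ)
    refine ⟨AlgEquiv.ofBijective _ (GWA.diagHom_bijective hq0 ⟨_, hγ'⟩ (Units.mk0 c hc) s),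
      ?_, ?_, ?_⟩ <;> simp
  · obtain ⟨hcc', hss'⟩ := GWA.smul_hZPow_inj hq0 (neg_ne_zero.mpr one_ne_zero)
      (hpp'.trans (by rw [pow_one]; exact (neg_one_smul k _).symm) :
        _ = (-1 : k) • hZPow k q d (-d))
    have hc : c ≠ 0 := left_ne_zero_of_mul (by rw [hcc']; exact neg_ne_zero.mpr one_ne_zero)
    obtain rfl : c' = -c⁻¹ := by field_simp; linear_combination hcc'
    obtain rfl : s' = -s - d := by omega
    have hγ' : ((Units.mk0 γ hγ0 : kˣ) : k) ^ d = (q ^ d)⁻¹ := by simpa [zpow_neg] using hγ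
    refine ⟨AlgEquiv.ofBijective _ (GWA.swapHom_bijective hq0 _ hγ' (Units.mk0 c hc) s),
      ?_, ?_, ?_⟩ <;> simp

/-- for `γ ∈ k*` with `γ^d = q^{-τd}`, `τ ∈ {0,1}`, and Laurent
monomial units `p = c h^s`, `p' = c' h^{s'}` with `p p' = (−h^{-d})^τ`, the
assignment `h ↦ γ h^{(-1)^τ}`, `x ↦ p x^{1-τ} y^τ`, `y ↦ x^τ y^{1-τ} p'`
extends to a `k`-algebra automorphism of `A`. -/
theorem stmt10 (hd : 1 ≤ d) (hq0 : q ≠ 0) (hqd : q ^ d ≠ 1)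
    (τ : ℕ) (hτ : τ ≤ 1) (γ : k) (hγ0 : γ ≠ 0) (hγ : γ ^ d = q ^ (-(τ : ℤ) * d))
    (c c' : k) (hc : c ≠ 0) (hc' : c' ≠ 0) (s s' : ℤ)
    (hpp' : (c • hZPow k q d s) * (c' • hZPow k q d s')
          = (-(hZPow k q d (-(d : ℤ)))) ^ τ) :
    ∃ ψ : GWA k q d ≃ₐ[k] GWA k q d,
      ψ (hGen k q d) = γ • hZPow k q d ((-1) ^ τ) ∧
      ψ (xGen k q d) = (c • hZPow k q d s) * xGen k q d ^ (1 - τ) * yGen k q d ^ τ ∧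
      ψ (yGen k q d) = xGen k q d ^ τ * yGen k q d ^ (1 - τ) * (c' • hZPow k q d s') :=
  stmt10_general hq0 τ hτ γ hγ0 hγ c c' s s' hpp'
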